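/- Let k > 0 be even and let S ⊆ [2n−1] with |S| = k, k < n. If C is a connected component of O_n(S) that is regular, then C is d-regular with d = n − k/2. Moreover for odd k > 0, O_n(S) has no regular component. -/

import Mathlib

/-!
A vertex `u` of `O_n(S)` is adjacent exactly to the sets `uᶜ.erase x` with `x ∈ uᶜ \ S`, so its
degree is `n - |S \ u|`. For an edge `uv` the sets `u`, `v` and the label `x` partition `[2n−1]`
with `x ∉ S`, so `S \ u` and `S \ v` partition `S` and the degrees of `u` and `v` add up to
`2n − k`. Since every degree is at least `n − k > 0`, a regular component has an edge, and its
degree `d` satisfies `2d = 2n − k`.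
-/

open Finset

/-- The Kneser graph: vertices are the `k`-element subsets of `[n]`,
adjacent iff disjoint. -/
def kneser (n k : ℕ) : SimpleGraph {s : Finset (Fin n) // s.card = k} where
  Adj u v := u ≠ v ∧ Disjoint (u : Finset (Fin n)) (v : Finset (Fin n))
  symm := by
    constructor
    intro u v h
    exact ⟨Ne.symm h.1, h.2.symm⟩
  loopless := by
    constructor
    intro u h
    exact h.1 rfl

instance kneserDec (n k : ℕ) : DecidableRel (kneser n k).Adj :=
  fun u v => inferInstanceAs (Decidable (u ≠ v ∧ Disjoint (u : Finset (Fin n)) (v : Finset (Fin n))))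

/-- The bipartite Kneser graph: vertices are the `k` and `(n-k)`-element subsets of `[n]`,
adjacent iff one is a proper subset of the other. -/
def bipKneser (n k : ℕ) : SimpleGraph {s : Finset (Fin n) // s.card = k ∨ s.card = n - k} where
  Adj u v := (u : Finset (Fin n)) ⊂ (v : Finset (Fin n)) ∨ (v : Finset (Fin n)) ⊂ (u : Finset (Fin n))
  symm := by
    constructor
    intro u v h
    exact h.symm
  loopless := by
    constructor
    intro u h
    cases h with
    | inl h => exact ssubset_irrefl _ h
    | inr h => exact ssubset_irrefl _ h

instance bipKneserDec (n k : ℕ) : DecidableRel (bipKneser n k).Adj :=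
  fun u v => inferInstanceAs (Decidable (_ ∨ _))

/-- The middle levels graph `B_n` is the bipartite Kneser graph `B_{2n-1, n-1}`. -/
def middleLevels (n : ℕ) := bipKneser (2 * n - 1) (n - 1)

/-- The odd graph `O_n` is the Kneser graph `K_{2n-1, n-1}`. -/
def oddGraph (n : ℕ) := kneser (2 * n - 1) (n - 1)

instance oddGraphDec (n : ℕ) : DecidableRel (oddGraph n).Adj := kneserDec _ _

/-- `O_n(S)`: the odd graph with every edge whose label lies in `S` deleted.  The label of an
edge `(u,v)` is the unique element of `[2n−1] − (u ∪ v)`, so an edge survives iff the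
complement of `u ∪ v` is disjoint from `S`. -/
def oddGraphDel (n : ℕ) (S : Finset (Fin (2 * n - 1))) :
    SimpleGraph {s : Finset (Fin (2 * n - 1)) // s.card = n - 1} where
  Adj u v := (oddGraph n).Adj u v ∧
    Disjoint ((u : Finset (Fin (2 * n - 1))) ∪ (v : Finset (Fin (2 * n - 1))))ᶜ S
  symm := by
    constructor
    intro u v h
    beta_reduce at h ⊢
    refine ⟨h.1.symm, ?_⟩
    rw [Finset.union_comm]
    exact h.2
  loopless := by
    constructor
    intro u h
    exact (oddGraph n).loopless.irrefl u h.1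

instance oddGraphDelDec (n : ℕ) (S : Finset (Fin (2 * n - 1))) :
    DecidableRel (oddGraphDel n S).Adj :=
  fun u v => inferInstanceAs (Decidable ((oddGraph n).Adj u v ∧ _))

open SimpleGraph

lemma SimpleGraph.ConnectedComponent.two_mul_eq_of_degree_add_degree {V : Type*}
    {G : SimpleGraph V} [G.LocallyFinite] {c : ℕ} (hpos : ∀ v, 0 < G.degree v)
    (hsum : ∀ u v, G.Adj u v → G.degree u + G.degree v = c) (C : G.ConnectedComponent) {d : ℕ}
    (hreg : ∀ v ∈ C.supp, G.degree v = d) : 2 * d = c := by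
  obtain ⟨w, rfl⟩ := C.exists_rep
  obtain ⟨v, hwv⟩ := (G.degree_pos_iff_exists_adj w).1 (hpos w)
  have hw : w ∈ (G.connectedComponentMk w).supp := rfl
  have hv : v ∈ (G.connectedComponentMk w).supp := (ConnectedComponent.sound hwv.reachable).symm
  rw [← hsum w v hwv, hreg w hw, hreg v hv, two_mul]

theorem Finset.card_sdiff_add_card_sdiff_of_disjoint {α : Type*} [Fintype α] [DecidableEq α]
    {s t u : Finset α} (hst : Disjoint s t) (hu : Disjoint (s ∪ t)ᶜ u) :
    (u \ s).card + (u \ t).card = u.card := by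
  rw [← card_union_add_card_inter, ← sdiff_inter_distrib_right, ← sdiff_union_distrib,
    disjoint_iff_inter_eq_empty.1 hst, sdiff_empty, sdiff_eq_inter_compl u (s ∪ t), inter_comm,
    disjoint_iff_inter_eq_empty.1 hu, card_empty, add_zero]

abbrev OddVertex (n : ℕ) := {s : Finset (Fin (2 * n - 1)) // s.card = n - 1}

section

variable {n : ℕ} {S : Finset (Fin (2 * n - 1))}

lemma OddVertex.card_compl (u : OddVertex n) : (u : Finset (Fin (2 * n - 1)))ᶜ.card = n := by
  rw [Finset.card_compl, u.2, Fintype.card_fin]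
  omega

lemma oddGraphDel_adj_iff (hn : 2 ≤ n) {u v : OddVertex n} :
    (oddGraphDel n S).Adj u v ↔ ∃ x ∈ (u : Finset (Fin (2 * n - 1)))ᶜ \ S,
      (v : Finset (Fin (2 * n - 1))) = (u : Finset (Fin (2 * n - 1)))ᶜ.erase x := by
  constructor
  · rintro ⟨⟨-, huv⟩, hlabel⟩
    obtain ⟨x, hx⟩ : ∃ x, ((u : Finset (Fin (2 * n - 1))) ∪ v)ᶜ = {x} := by
      rw [← card_eq_one, card_compl, card_union_of_disjoint huv, u.2, v.2, Fintype.card_fin]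
      omega
    have hxuv : x ∉ (u : Finset (Fin (2 * n - 1))) ∪ v := mem_compl.1 (hx ▸ mem_singleton_self x)
    refine ⟨x, mem_sdiff.2 ⟨mem_compl.2 fun h => hxuv (mem_union_left _ h),
      disjoint_singleton_left.1 (hx ▸ hlabel)⟩, ?_⟩
    refine eq_of_subset_of_card_le (fun y hy => ?_) ?_
    · exact mem_erase.2 ⟨by rintro rfl; exact hxuv (mem_union_right _ hy),
        mem_compl.2 fun hyu => disjoint_left.1 huv hyu hy⟩
    · rw [card_erase_of_mem (mem_compl.2 fun h => hxuv (mem_union_left _ h)), u.card_compl, v.2]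
  · rintro ⟨x, hx, hv⟩
    have huv : Disjoint (u : Finset (Fin (2 * n - 1))) v :=
      hv ▸ disjoint_compl_right.mono_right (erase_subset _ _)
    refine ⟨⟨fun h => ?_, huv⟩, disjoint_left.2 fun y hy hyS => ?_⟩
    · subst h
      have hu := u.2
      rw [(disjoint_self_iff_empty _).1 huv, card_empty] at hu
      omega
    · have hyx : y = x := by
        simp only [hv, mem_compl, mem_union, mem_erase] at hy
        tauto
      exact (mem_sdiff.1 hx).2 (hyx ▸ hyS)

lemma degree_oddGraphDel_add_card_sdiff (hn : 2 ≤ n) (u : OddVertex n) :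
    (oddGraphDel n S).degree u + (S \ u).card = n := by
  have hcard : (oddGraphDel n S).degree u = ((u : Finset (Fin (2 * n - 1)))ᶜ \ S).card := by
    rw [← card_neighborFinset_eq_degree]
    symm
    refine card_bij (fun x hx => ⟨(u : Finset (Fin (2 * n - 1)))ᶜ.erase x, ?_⟩) ?_ ?_ ?_
    · rw [card_erase_of_mem (mem_sdiff.1 hx).1, u.card_compl]
    · exact fun x hx => (mem_neighborFinset _ _ _).2 ((oddGraphDel_adj_iff hn).2 ⟨x, hx, rfl⟩)
    · exact fun x hx y hy hxy =>
        erase_injOn _ (mem_sdiff.1 hx).1 (mem_sdiff.1 hy).1 (congrArg Subtype.val hxy)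
    · intro v hv
      obtain ⟨x, hx, hv⟩ := (oddGraphDel_adj_iff hn).1 ((mem_neighborFinset _ _ _).1 hv)
      exact ⟨x, hx, Subtype.ext hv.symm⟩
  rw [hcard, sdiff_eq_inter_compl S, inter_comm, card_sdiff_add_card_inter, u.card_compl]

lemma degree_oddGraphDel_pos (hn : 2 ≤ n) (hSn : S.card < n) (u : OddVertex n) :
    0 < (oddGraphDel n S).degree u := by
  have hdeg := degree_oddGraphDel_add_card_sdiff (S := S) hn u
  have hle := card_le_card (sdiff_subset (s := S) (t := u))
  omega

lemma degree_oddGraphDel_add_degree (hn : 2 ≤ n) {u v : OddVertex n}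
    (huv : (oddGraphDel n S).Adj u v) :
    (oddGraphDel n S).degree u + (oddGraphDel n S).degree v = 2 * n - S.card := by
  have hu := degree_oddGraphDel_add_card_sdiff (S := S) hn u
  have hv := degree_oddGraphDel_add_card_sdiff (S := S) hn v
  have hpartition := card_sdiff_add_card_sdiff_of_disjoint huv.1.2 huv.2
  omega

end

/-- Let `S ⊆ [2n−1]` with `|S| = k`, `0 < k < n`.  If `k` is even, then any
regular connected component of `O_n(S)` is `(n − k/2)`-regular; and if `k` is odd, then
`O_n(S)` has no regular component. -/
theorem regular_components_degree (n k : ℕ) (hk : 0 < k) (hkn : k < n)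
    (S : Finset (Fin (2 * n - 1))) (hS : S.card = k) :
    (Even k →
      ∀ (C : (oddGraphDel n S).ConnectedComponent) (d : ℕ),
        (∀ v ∈ C.supp, (oddGraphDel n S).degree v = d) → d = n - k / 2) ∧
    (Odd k →
      ¬ ∃ (C : (oddGraphDel n S).ConnectedComponent) (d : ℕ),
          ∀ v ∈ C.supp, (oddGraphDel n S).degree v = d) := by
  have hn : 2 ≤ n := by omega
  have hregular (C : (oddGraphDel n S).ConnectedComponent) (d : ℕ)
      (hreg : ∀ v ∈ C.supp, (oddGraphDel n S).degree v = d) : 2 * d = 2 * n - S.card :=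
    C.two_mul_eq_of_degree_add_degree (degree_oddGraphDel_pos hn (hS ▸ hkn))
      (fun _ _ => degree_oddGraphDel_add_degree hn) hreg
  refine ⟨fun ⟨m, hm⟩ C d hreg => ?_, fun ⟨m, hm⟩ ⟨C, d, hreg⟩ => ?_⟩
  · have := hregular C d hreg
    omega
  · have := hregular C d hreg
    omega
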